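/- Let Q1 and Q2 be n×n complex positive semidefinite matrices and let U be a unitary matrix giving the polar decomposition Q2·Q1 = U·|Q2·Q1|. Then for every unitary n×n matrix R, the Frobenius norm satisfies ‖Q1 − Uᴴ·Q2‖_F ≤ ‖Q1 − R·Q2‖_F; equivalently, for every unitary R, Re(trace(R·Q2·Q1)) ≤ trace(|Q2·Q1|), with equality when R = Uᴴ. -/

import Mathlib

open Matrix
open scoped ComplexOrder
open scoped Classical

/-- The positive semidefinite square root of a positive semidefinite matrix
(junk value `0` if the matrix is not positive semidefinite). -/
noncomputable def psdSqrt {n : ℕ} (X : Matrix (Fin n) (Fin n) ℂ) : Matrix (Fin n) (Fin n) ℂ :=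
  if h : X.PosSemidef then
    (h.1.eigenvectorUnitary : Matrix (Fin n) (Fin n) ℂ) *
      diagonal ((↑) ∘ (Real.sqrt ·) ∘ h.1.eigenvalues) *
      (star h.1.eigenvectorUnitary : Matrix (Fin n) (Fin n) ℂ)
  else 0

/-- The matrix absolute value `|X| = (Xᴴ X)^{1/2}`. -/
noncomputable def matAbs {n : ℕ} (X : Matrix (Fin n) (Fin n) ℂ) : Matrix (Fin n) (Fin n) ℂ :=
  psdSqrt (Xᴴ * X)

/-- The Frobenius norm ‖X‖_F = sqrt(trace(Xᴴ X)). -/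
noncomputable def frobNorm {n : ℕ} (X : Matrix (Fin n) (Fin n) ℂ) : ℝ :=
  Real.sqrt (Xᴴ * X).trace.re

lemma EuclideanSpace.inner_piLp_equiv_symm {n : ℕ} (x y : Fin n → ℂ) :
    inner ℂ ((WithLp.equiv 2 _).symm x : EuclideanSpace ℂ (Fin n)) ((WithLp.equiv 2 _).symm y)
      = dotProduct y (star x) := rfl

open scoped MatrixOrder in
lemma re_trace_unitary_mul_psd_le {n : ℕ} (W P : Matrix (Fin n) (Fin n) ℂ)
    (hW : W ∈ Matrix.unitaryGroup (Fin n) ℂ) (hP : P.PosSemidef) :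
    (W * P).trace.re ≤ P.trace.re := by
  have hS := (CFC.sqrt_nonneg P).posSemidef
  set S := CFC.sqrt P with hSdef
  have hSS : S * S = P := CFC.sqrt_mul_sqrt_self P hP.nonneg
  have hWW : Wᴴ * W = 1 := by
    simpa [Matrix.star_eq_conjTranspose] using hW.1
  have htr : (W * P).trace = (S * W * S).trace := by
    rw [← hSS, ← Matrix.mul_assoc, Matrix.trace_mul_cycle]
  rw [htr, Matrix.trace, Matrix.trace, Complex.re_sum, Complex.re_sum]
  simp only [Matrix.diag_apply]
  refine Finset.sum_le_sum fun i _ => ?_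
  set v : EuclideanSpace ℂ (Fin n) := (WithLp.equiv 2 _).symm (fun j => S j i) with hv
  set w : EuclideanSpace ℂ (Fin n) := (WithLp.equiv 2 _).symm (W *ᵥ (fun j => S j i)) with hw
  have h1 : (S * W * S) i i = (inner ℂ v w : ℂ) := by
    rw [EuclideanSpace.inner_piLp_equiv_symm]
    simp only [Matrix.mul_apply, dotProduct, Matrix.mulVec, dotProduct,
      Pi.star_apply, RCLike.star_def]
    have hconj : ∀ a b, (starRingEnd ℂ) (S a b) = S b a := fun a b => by
      conv_rhs => rw [← hS.1.eq]
      simp [Matrix.conjTranspose_apply]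
    simp only [hconj, Finset.sum_mul, Finset.mul_sum]
    rw [Finset.sum_comm]
    exact Finset.sum_congr rfl fun j _ => Finset.sum_congr rfl fun k _ => by ring
  have h2 : (inner ℂ v v : ℂ) = P i i := by
    rw [EuclideanSpace.inner_piLp_equiv_symm, ← hSS]
    simp only [Matrix.mul_apply, dotProduct, Pi.star_apply, RCLike.star_def]
    refine Finset.sum_congr rfl fun j _ => ?_
    have hconj : (starRingEnd ℂ) (S j i) = S i j := by
      conv_rhs => rw [← hS.1.eq]
      simp [Matrix.conjTranspose_apply]
    rw [hconj, mul_comm]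
  have h3 : (inner ℂ w w : ℂ) = (inner ℂ v v : ℂ) := by
    rw [EuclideanSpace.inner_piLp_equiv_symm, EuclideanSpace.inner_piLp_equiv_symm]
    rw [Matrix.star_mulVec, dotProduct_comm, ← Matrix.dotProduct_mulVec, Matrix.mulVec_mulVec, hWW]
    simp [dotProduct_comm]
  have ew : (inner ℂ w w : ℂ).re = ‖w‖ ^ 2 := by
    simpa using inner_self_eq_norm_sq (𝕜 := ℂ) w
  have ev : (inner ℂ v v : ℂ).re = ‖v‖ ^ 2 := by
    simpa using inner_self_eq_norm_sq (𝕜 := ℂ) v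
  have hnw : ‖w‖ = ‖v‖ := by
    have := congrArg Complex.re h3
    rw [ew, ev] at this
    nlinarith [norm_nonneg w, norm_nonneg v]
  calc ((S * W * S) i i).re = (inner ℂ v w : ℂ).re := by rw [h1]
    _ ≤ ‖(inner ℂ v w : ℂ)‖ := Complex.re_le_norm _
    _ ≤ ‖v‖ * ‖w‖ := norm_inner_le_norm v w
    _ = ‖v‖ ^ 2 := by rw [hnw]; ring
    _ = (inner ℂ v v : ℂ).re := ev.symm
    _ = (P i i).re := by rw [h2]

lemma expand_trace {n : ℕ} (Q1 Q2 T : Matrix (Fin n) (Fin n) ℂ)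
    (hQ1 : Q1.PosSemidef) (hT : T ∈ Matrix.unitaryGroup (Fin n) ℂ) :
    ((Q1 - T * Q2)ᴴ * (Q1 - T * Q2)).trace.re
      = (Q1ᴴ * Q1).trace.re + (Q2ᴴ * Q2).trace.re - 2 * (T * Q2 * Q1).trace.re := by
  have hTT : Tᴴ * T = 1 := by simpa [Matrix.star_eq_conjTranspose] using hT.1
  have hexp : (Q1 - T * Q2)ᴴ * (Q1 - T * Q2)
      = Q1ᴴ * Q1 - Q1ᴴ * (T * Q2) - Q2ᴴ * Tᴴ * Q1 + Q2ᴴ * Q2 := by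
    rw [Matrix.conjTranspose_sub, Matrix.conjTranspose_mul]
    rw [Matrix.sub_mul, Matrix.mul_sub, Matrix.mul_sub]
    have : Q2ᴴ * Tᴴ * (T * Q2) = Q2ᴴ * Q2 := by
      rw [Matrix.mul_assoc, ← Matrix.mul_assoc Tᴴ, hTT, Matrix.one_mul]
    rw [this]; abel
  rw [hexp, Matrix.trace_add, Matrix.trace_sub, Matrix.trace_sub]
  have h2 : (Q1ᴴ * (T * Q2)).trace = (T * Q2 * Q1).trace := by
    rw [hQ1.1.eq, Matrix.trace_mul_comm]
  have h3 : (Q2ᴴ * Tᴴ * Q1).trace.re = (T * Q2 * Q1).trace.re := by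
    have : Q2ᴴ * Tᴴ * Q1 = (Q1ᴴ * (T * Q2))ᴴ := by
      rw [Matrix.conjTranspose_mul, Matrix.conjTranspose_conjTranspose,
        Matrix.conjTranspose_mul]
    rw [this, Matrix.trace_conjTranspose, h2]
    simp [Complex.star_def]
  simp only [Complex.add_re, Complex.sub_re, h2, h3]
  ring


/-- The polar unitary factor U of Q2·Q1 minimises the Frobenius distance
‖Q1 − R·Q2‖_F over unitary R; equivalently Re(trace(R·Q2·Q1)) ≤ trace(|Q2·Q1|)
for every unitary R, with equality when R = Uᴴ. -/
theorem frobNorm_sub_polarUnitary_le {n : ℕ}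
    (Q1 Q2 U R : Matrix (Fin n) (Fin n) ℂ)
    (hQ1 : Q1.PosSemidef) (hQ2 : Q2.PosSemidef)
    (hU : U ∈ Matrix.unitaryGroup (Fin n) ℂ)
    (hpolar : Q2 * Q1 = U * matAbs (Q2 * Q1))
    (hR : R ∈ Matrix.unitaryGroup (Fin n) ℂ) :
    frobNorm (Q1 - Uᴴ * Q2) ≤ frobNorm (Q1 - R * Q2) ∧
    (R * Q2 * Q1).trace.re ≤ (matAbs (Q2 * Q1)).trace.re ∧
    (Uᴴ * Q2 * Q1).trace.re = (matAbs (Q2 * Q1)).trace.re := by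
  set B := matAbs (Q2 * Q1) with hB
  have hAA : ((Q2 * Q1)ᴴ * (Q2 * Q1)).PosSemidef :=
    Matrix.posSemidef_conjTranspose_mul_self (Q2 * Q1)
  have hAbs : B.PosSemidef := by
    rw [hB, matAbs, psdSqrt, dif_pos hAA]
    exact (PosSemidef.diagonal (fun i => Complex.zero_le_real.mpr (Real.sqrt_nonneg _))).mul_mul_conjTranspose_same _
  have hUU : Uᴴ * U = 1 := by simpa [Matrix.star_eq_conjTranspose] using hU.1
  -- equality part
  have heq : Uᴴ * Q2 * Q1 = B := by
    rw [Matrix.mul_assoc, hpolar, ← Matrix.mul_assoc, hUU, Matrix.one_mul]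
  -- inequality part
  have hRU : R * U ∈ Matrix.unitaryGroup (Fin n) ℂ := mul_mem hR hU
  have hineq : (R * Q2 * Q1).trace.re ≤ B.trace.re := by
    have : R * Q2 * Q1 = (R * U) * B := by
      rw [Matrix.mul_assoc, hpolar, Matrix.mul_assoc]
    rw [this]
    exact re_trace_unitary_mul_psd_le _ _ hRU hAbs
  have hUstar : Uᴴ ∈ Matrix.unitaryGroup (Fin n) ℂ := by
    rw [← Matrix.star_eq_conjTranspose]
    exact Unitary.star_mem hU
  refine ⟨?_, hineq, by rw [heq]⟩
  rw [frobNorm, frobNorm]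
  apply Real.sqrt_le_sqrt
  rw [expand_trace Q1 Q2 Uᴴ hQ1 hUstar, expand_trace Q1 Q2 R hQ1 hR, heq]
  linarith
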